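/- Let λ_n be a sequence of real random variables with λ_n - log(n+1) → -∞ in probability, and let pen_n be real constants with pen_n ≤ -(1/2) log(n+1) + C for a fixed constant C. Then w_n = expit(pen_n + (1/2)λ_n) → 0 in probability. Conversely, if λ_n / n → ℓ > 0 in probability and pen_n ≥ -K n/(log n)^r - (1/2) log(n+1) for constants K > 0 and 0 < r < 1, then w_n → 1 in probability. -/
import Mathlib


open MeasureTheory Filter

noncomputable def expit (x : ℝ) : ℝ := 1 / (1 + Real.exp (-x))

lemma expit_le_exp (x : ℝ) : expit x ≤ Real.exp x := by
  unfold expit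
  rw [div_le_iff₀ (by positivity)]
  have h : Real.exp x * Real.exp (-x) = 1 := by rw [← Real.exp_add]; simp
  nlinarith [Real.exp_pos x, Real.exp_pos (-x)]

lemma one_sub_exp_le_expit (x : ℝ) : 1 - Real.exp (-x) ≤ expit x := by
  unfold expit
  rw [le_div_iff₀ (by positivity)]
  nlinarith [Real.exp_pos (-x), sq_nonneg (Real.exp (-x))]

lemma squeeze_meas {Ω : Type*} [MeasurableSpace Ω] (P : Measure Ω) [IsProbabilityMeasure P]
    (A B : ℕ → Set Ω)
    (hsub : ∀ᶠ n in atTop, A n ⊆ B n)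
    (hB : Tendsto (fun n : ℕ => (P (B n)).toReal) atTop (nhds 0)) :
    Tendsto (fun n : ℕ => (P (A n)).toReal) atTop (nhds 0) := by
  refine squeeze_zero' (Eventually.of_forall fun n => ENNReal.toReal_nonneg) ?_ hB
  filter_upwards [hsub] with n hn
  exact ENNReal.toReal_mono (measure_ne_top P _) (measure_mono hn)

theorem stmt19 {Ω : Type*} [MeasurableSpace Ω] (P : Measure Ω) [IsProbabilityMeasure P]
    (lam : ℕ → Ω → ℝ) (pen : ℕ → ℝ) :
    ((∀ M : ℝ,
        Tendsto (fun n : ℕ => (P {ω | -M < lam n ω - Real.log (n + 1)}).toReal) atTop (nhds 0)) →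
      (∃ C : ℝ, ∀ n : ℕ, pen n ≤ -(1 / 2) * Real.log (n + 1) + C) →
      ∀ ε > (0 : ℝ),
        Tendsto (fun n : ℕ => (P {ω | ε < expit (pen n + (1 / 2) * lam n ω)}).toReal)
          atTop (nhds 0))
    ∧ (∀ ℓ : ℝ, 0 < ℓ →
      (∀ ε > (0 : ℝ),
        Tendsto (fun n : ℕ => (P {ω | ε < |lam n ω / n - ℓ|}).toReal) atTop (nhds 0)) →
      (∃ K > (0 : ℝ), ∃ r : ℝ, 0 < r ∧ r < 1 ∧ ∀ n : ℕ, 2 ≤ n →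
        -K * n / (Real.log n) ^ r - (1 / 2) * Real.log (n + 1) ≤ pen n) →
      ∀ ε > (0 : ℝ),
        Tendsto (fun n : ℕ => (P {ω | expit (pen n + (1 / 2) * lam n ω) < 1 - ε}).toReal)
          atTop (nhds 0)) := by
  constructor
  · intro hlam hpen ε hε
    obtain ⟨C, hC⟩ := hpen
    refine squeeze_meas P _ _ (Eventually.of_forall fun n => ?_) (hlam (2 * (C - Real.log ε)))
    intro ω hω
    simp only [Set.mem_setOf_eq] at hω ⊢
    by_contra hcon
    push_neg at hcon
    have hx : pen n + (1 / 2) * lam n ω ≤ Real.log ε := by nlinarith [hC n]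
    have hle : expit (pen n + (1 / 2) * lam n ω) ≤ ε := by
      refine (expit_le_exp _).trans ?_
      rw [← Real.exp_log hε]
      exact Real.exp_le_exp.mpr hx
    linarith
  · intro ℓ hℓ hlam hpen ε hε
    obtain ⟨K, hK, r, hr0, hr1, hpen⟩ := hpen
    -- eventual facts
    have t1 : Tendsto (fun n : ℕ => Real.log n) atTop atTop :=
      Real.tendsto_log_atTop.comp tendsto_natCast_atTop_atTop
    have t2 : Tendsto (fun n : ℕ => (Real.log n) ^ r) atTop atTop :=
      (tendsto_rpow_atTop hr0).comp t1
    have hA : ∀ᶠ n : ℕ in atTop, K / (Real.log n) ^ r ≤ ℓ / 8 := by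
      have T : Tendsto (fun n : ℕ => K / (Real.log n) ^ r) atTop (nhds 0) :=
        Tendsto.div_atTop tendsto_const_nhds t2
      exact T.eventually (eventually_le_nhds (by positivity))
    have hlo : (fun n : ℕ => Real.log ((n : ℝ) + 1)) =o[atTop] (fun n : ℕ => (n : ℝ) + 1) :=
      Real.isLittleO_log_id_atTop.comp_tendsto
        (tendsto_atTop_add_const_right _ 1 tendsto_natCast_atTop_atTop)
    have hB : ∀ᶠ n : ℕ in atTop, (1 / 2) * Real.log ((n : ℝ) + 1) ≤ ℓ / 64 * n := by
      have h64 : (0 : ℝ) < ℓ / 64 := by positivity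
      filter_upwards [hlo.def h64, eventually_ge_atTop 1] with n hn hn1
      have hn1' : (1 : ℝ) ≤ (n : ℝ) := by exact_mod_cast hn1
      have hnn : (0 : ℝ) ≤ (n : ℝ) + 1 := by linarith
      rw [Real.norm_eq_abs, Real.norm_eq_abs, abs_of_nonneg hnn] at hn
      have : Real.log ((n : ℝ) + 1) ≤ ℓ / 64 * ((n : ℝ) + 1) := (le_abs_self _).trans hn
      nlinarith
    have hCst : ∀ᶠ n : ℕ in atTop, -Real.log ε ≤ ℓ / 32 * n := by
      have : Tendsto (fun n : ℕ => ℓ / 32 * n) atTop atTop :=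
        Tendsto.const_mul_atTop (by positivity) tendsto_natCast_atTop_atTop
      exact this.eventually_ge_atTop _
    refine squeeze_meas P _ _ ?_ (hlam (ℓ / 2) (by positivity))
    filter_upwards [hA, hB, hCst, eventually_ge_atTop 2] with n hAn hBn hCn hn2
    intro ω hω
    simp only [Set.mem_setOf_eq] at hω ⊢
    by_contra hcon
    push_neg at hcon
    -- from |lam/n - ℓ| ≤ ℓ/2 derive lam ≥ ℓ/2 * n
    have hnpos : (0 : ℝ) < (n : ℝ) := by
      have : (2 : ℝ) ≤ (n : ℝ) := by exact_mod_cast hn2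
      linarith
    have h1 : ℓ / 2 ≤ lam n ω / n := by
      have := abs_le.mp hcon
      linarith [this.1]
    have hlamn : ℓ / 2 * n ≤ lam n ω := (le_div_iff₀ hnpos).mp h1
    -- lower bound on the exponent
    have hlogpos : 0 < (Real.log n) ^ r := by
      have h1n : (1 : ℝ) < (n : ℝ) := by
        have : (2 : ℝ) ≤ (n : ℝ) := by exact_mod_cast hn2
        linarith
      exact Real.rpow_pos_of_pos (Real.log_pos h1n) r
    have hKn : -K * n / (Real.log n) ^ r ≥ -(ℓ / 8 * n) := by
      have : K / (Real.log n) ^ r * n ≤ ℓ / 8 * n :=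
        mul_le_mul_of_nonneg_right hAn hnpos.le
      have heq : -K * n / (Real.log n) ^ r = -(K / (Real.log n) ^ r * n) := by
        field_simp
      rw [heq]
      linarith
    have hpenn := hpen n hn2
    have hx : -Real.log ε ≤ pen n + (1 / 2) * lam n ω := by
      have : ℓ / 32 * n ≤ -(ℓ / 8 * n) - (1 / 2) * Real.log ((n : ℝ) + 1) + (1 / 2) * (ℓ / 2 * n) := by
        nlinarith
      nlinarith
    have hexp : Real.exp (-(pen n + (1 / 2) * lam n ω)) ≤ ε := by
      rw [← Real.exp_log hε]
      exact Real.exp_le_exp.mpr (by linarith)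
    have := one_sub_exp_le_expit (pen n + (1 / 2) * lam n ω)
    linarith
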